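/- arXiv:2207.07218 — 5 statements merged into one kernel-verified Lean document; each statement's English description precedes it below -/
import Mathlib

section
/- Every trilateration graph in dimension p is (p+1)-vertex-connected, provided it has at least p+2 vertices. -/
/-!
Remove a set `K` of at most `p` vertices. Since the initial clique has `p + 1` vertices, one
of them survives, and the surviving initial vertices are pairwise adjacent. Every later vertex
has `p + 1` earlier neighbours, so one of them survives; descending along such neighbours
reaches the initial clique, hence every surviving vertex is joined to it.
-/

/-- A trilateration graph in dimension `p`: at least `p+1` vertices, and an ordering
(given by a permutation `v`) such that the first `p+1` vertices induce a complete
subgraph and each later vertex is adjacent to at least `p+1` earlier vertices. -/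
def IsTrilateration {n : ℕ} (p : ℕ) (G : SimpleGraph (Fin n)) : Prop :=
  p + 1 ≤ n ∧ ∃ v : Fin n ≃ Fin n,
    (∀ i j : Fin n, i.val < p + 1 → j.val < p + 1 → i ≠ j → G.Adj (v i) (v j)) ∧
    ∀ j : Fin n, p + 1 ≤ j.val →
      p + 1 ≤ {i : Fin n | i < j ∧ G.Adj (v i) (v j)}.ncard

theorem Set.exists_mem_apply_notMem_of_ncard_lt {α β : Type*} {f : α → β}
    (hf : Function.Injective f) {S : Set α} {K : Set β} (hK : K.Finite)
    (h : K.ncard < S.ncard) : ∃ x ∈ S, f x ∉ K := by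
  obtain ⟨_, ⟨x, hx, rfl⟩, hxK⟩ :=
    exists_mem_notMem_of_ncard_lt_ncard (t := f '' S) (by rwa [ncard_image_of_injective _ hf]) hK
  exact ⟨x, hx, hxK⟩

theorem Fin.ncard_setOf_val_lt {n k : ℕ} (h : k ≤ n) : {i : Fin n | (i : ℕ) < k}.ncard = k := by
  rw [← Fin.range_castLE h, Set.ncard_range_of_injective (Fin.castLE_injective h), Nat.card_fin]

namespace SimpleGraph

variable {V α : Type*} [LT α] [WellFoundedLT α] (H : SimpleGraph V) (f : V → α) (B : Set V)

theorem exists_reachable_mem_of_forall_exists_adj_lt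
    (hstep : ∀ w ∉ B, ∃ u, f u < f w ∧ H.Adj w u) (w : V) : ∃ b ∈ B, H.Reachable w b := by
  induction hw : f w using WellFoundedLT.induction generalizing w with
  | _ a ih =>
    by_cases hwB : w ∈ B
    · exact ⟨w, hwB, .rfl⟩
    · obtain ⟨u, hlt, hadj⟩ := hstep w hwB
      obtain ⟨b, hb, hub⟩ := ih (f u) (hw ▸ hlt) u rfl
      exact ⟨b, hb, hadj.reachable.trans hub⟩

theorem connected_of_isClique_of_forall_exists_adj_lt (hB : B.Nonempty) (hclique : H.IsClique B)
    (hstep : ∀ w ∉ B, ∃ u, f u < f w ∧ H.Adj w u) : H.Connected := by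
  have hreach : ∀ b ∈ B, ∀ b' ∈ B, H.Reachable b b' := fun b hb b' hb' => by
    rcases eq_or_ne b b' with rfl | hne
    · exact .rfl
    · exact (hclique hb hb' hne).reachable
  obtain ⟨b₀, hb₀⟩ := hB
  have hreach₀ : ∀ w, H.Reachable w b₀ := fun w => by
    obtain ⟨b, hb, hwb⟩ := exists_reachable_mem_of_forall_exists_adj_lt H f B hstep w
    exact hwb.trans (hreach b hb b₀ hb₀)
  exact (connected_iff _).2 ⟨fun x y => (hreach₀ x).trans (hreach₀ y).symm, ⟨b₀⟩⟩

end SimpleGraph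

/-- Every trilateration graph in dimension `p` with at least `p+2` vertices is
`(p+1)`-vertex-connected: it has more than `p+1` vertices and the subgraph induced
on the complement of any set of fewer than `p+1` vertices is connected. -/
theorem trilateration_vertexConnected {n p : ℕ} (G : SimpleGraph (Fin n))
    (h : IsTrilateration p G) (hn : p + 2 ≤ n) :
    p + 1 < n ∧
      ∀ K : Set (Fin n), K.ncard < p + 1 → (G.induce Kᶜ).Connected := by
  obtain ⟨hpn, v, hclique, hlate⟩ := h
  refine ⟨hn, fun K hK => ?_⟩
  have hsurvivor : ∀ S : Set (Fin n), p + 1 ≤ S.ncard → ∃ i ∈ S, v i ∉ K := fun S hS =>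
    Set.exists_mem_apply_notMem_of_ncard_lt v.injective K.toFinite (by omega)
  obtain ⟨i₀, hi₀, hi₀K⟩ := hsurvivor _ (Fin.ncard_setOf_val_lt hpn).ge
  refine (G.induce Kᶜ).connected_of_isClique_of_forall_exists_adj_lt (fun x => v.symm x)
    {x | (v.symm x : ℕ) < p + 1} ⟨⟨v i₀, hi₀K⟩, by simpa using hi₀⟩ ?_ ?_
  · intro x hx y hy hxy
    simpa using hclique _ _ hx hy (v.symm.injective.ne (Subtype.coe_injective.ne hxy))
  · intro x hx
    obtain ⟨i, ⟨hlt, hadj⟩, hiK⟩ := hsurvivor _ (hlate (v.symm x) (not_lt.1 hx))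
    exact ⟨⟨v i, hiK⟩, by simpa using hlt, by simpa using hadj.symm⟩
end

section
/- Let Omega ⊂ R^p be bounded, open, and connected, and let x_1,...,x_n ∈ Omega. Suppose there exist sets A_{j_0},...,A_{j_S} ⊆ Omega, each of diameter strictly less than r, whose union contains all the points x_1,...,x_n, such that each consecutive intersection I_s = A_{j_{s-1}} ∩ A_{j_s} contains at least p+1 of the points x_1,...,x_n, and also A_{j_0} itself contains at least p+1 points in I_1 ⊆ A_{j_0}. Then the geometric graph on x_1,...,x_n with connectivity radius r is a trilateration graph in dimension p. -/
/-!
Order the points by the index of the first set of the chain that contains them. The points of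
`A 0` come first and form a clique; a point first covered by `A (s + 1)` comes after every point
of `A s ∩ A (s + 1)`, and it shares with them the set `A (s + 1)` of diameter `< r`, so it has at
least `p + 1` earlier neighbours.
-/

/-- The geometric graph on points `x : Fin n → ℝ^p` with connectivity radius `r`:
an edge between `i ≠ j` iff `dist (x i) (x j) < r`. -/
def geomGraph {n p : ℕ} (x : Fin n → EuclideanSpace ℝ (Fin p)) (r : ℝ) :
    SimpleGraph (Fin n) where
  Adj i j := i ≠ j ∧ dist (x i) (x j) < r
  symm := by
    constructor
    intro i j h
    exact ⟨h.1.symm, by rw [dist_comm]; exact h.2⟩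
  loopless := by
    constructor
    intro i h
    exact h.1 rfl

open Set

lemma Fin.ncard_Iio {n : ℕ} (t : Fin n) : (Iio t).ncard = t := by
  rw [← Finset.coe_Iio, ncard_coe_finset, Fin.card_Iio]

theorem isTrilateration_of_levels {n p : ℕ} {β : Type*} [LinearOrder β]
    {G : SimpleGraph (Fin n)} (σ : Fin n → β) (b : β)
    (hcard : p + 1 ≤ {k | σ k ≤ b}.ncard) (hclique : G.IsClique {k | σ k ≤ b})
    (hstep : ∀ j, b < σ j → p + 1 ≤ {k | σ k < σ j ∧ G.Adj k j}.ncard) :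
    IsTrilateration p G := by
  set v := Tuple.sort σ
  have hmono : Monotone (σ ∘ v) := Tuple.monotone_sort σ
  have hlow : ∀ t : Fin n, t.val < p + 1 → σ (v t) ≤ b := by
    intro t ht
    by_contra! hbt
    have hsub : v ⁻¹' {k | σ k ≤ b} ⊆ Iio t := fun u hu =>
      lt_of_not_ge fun htu => (hbt.trans_le (hmono htu)).not_ge hu
    have := ncard_le_ncard hsub
    rw [ncard_preimage_of_injective_subset_range v.injective (by simp), Fin.ncard_Iio] at this
    omega
  refine ⟨hcard.trans ((ncard_le_card _).trans_eq (Nat.card_fin n)), v, ?_, ?_⟩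
  · intro i j hi hj hij
    exact hclique (hlow i hi) (hlow j hj) (v.injective.ne hij)
  · intro j hj
    rcases le_or_gt (σ (v j)) b with hjb | hbj
    · have hsub : Iio j ⊆ {i | i < j ∧ G.Adj (v i) (v j)} := fun i hi =>
        ⟨hi, hclique ((hmono hi.le).trans hjb) hjb (v.injective.ne hi.ne)⟩
      exact (hj.trans_eq (Fin.ncard_Iio j).symm).trans (ncard_le_ncard hsub)
    · have hsub : v.symm '' {k | σ k < σ (v j) ∧ G.Adj k (v j)} ⊆
          {i | i < j ∧ G.Adj (v i) (v j)} := by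
        rintro _ ⟨k, ⟨hk, hadj⟩, rfl⟩
        exact ⟨hmono.reflect_lt (by simpa using hk), by simpa using hadj⟩
      calc p + 1 ≤ _ := hstep _ hbj
        _ = _ := (ncard_image_of_injective _ v.symm.injective).symm
        _ ≤ _ := ncard_le_ncard hsub

lemma geomGraph_adj_of_mem {n p : ℕ} {x : Fin n → EuclideanSpace ℝ (Fin p)} {r : ℝ}
    {B : Set (EuclideanSpace ℝ (Fin p))} (hB : Bornology.IsBounded B) (hdiam : Metric.diam B < r)
    {i j : Fin n} (hij : i ≠ j) (hi : x i ∈ B) (hj : x j ∈ B) : (geomGraph x r).Adj i j :=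
  ⟨hij, (Metric.dist_le_diam_of_mem hB hi hj).trans_lt hdiam⟩

section FirstCover

variable {α : Type*} {n S : ℕ} {A : Fin (S + 1) → Set α} {x : Fin n → α}

noncomputable def firstCover (A : Fin (S + 1) → Set α) (x : Fin n → α)
    (hcov : ∀ i, ∃ s, x i ∈ A s) (i : Fin n) : Fin (S + 1) :=
  by classical exact Fin.find (fun s => x i ∈ A s) (hcov i)

lemma mem_firstCover (hcov : ∀ i, ∃ s, x i ∈ A s) (i : Fin n) :
    x i ∈ A (firstCover A x hcov i) := by
  classical exact Fin.find_spec (hcov i)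

lemma firstCover_le (hcov : ∀ i, ∃ s, x i ∈ A s) {i : Fin n} {s : Fin (S + 1)} (h : x i ∈ A s) :
    firstCover A x hcov i ≤ s := by
  classical exact Fin.find_le_of_pos (hcov i) h

end FirstCover

theorem chain_cover_trilateration_general {n p S : ℕ} (r : ℝ)
    (Ω : Set (EuclideanSpace ℝ (Fin p)))
    (hbdd : Bornology.IsBounded Ω)
    (x : Fin n → EuclideanSpace ℝ (Fin p))
    (A : Fin (S + 1) → Set (EuclideanSpace ℝ (Fin p)))
    (hA : ∀ s, A s ⊆ Ω)
    (hdiam : ∀ s, Metric.diam (A s) < r)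
    (hcov : ∀ i, ∃ s, x i ∈ A s)
    (h0 : p + 1 ≤ {i : Fin n | x i ∈ A 0}.ncard)
    (hI : ∀ s : Fin S,
      p + 1 ≤ {i : Fin n | x i ∈ A s.castSucc ∩ A s.succ}.ncard) :
    IsTrilateration p (geomGraph x r) := by
  set σ := firstCover A x hcov
  have hadj : ∀ s {i j}, i ≠ j → x i ∈ A s → x j ∈ A s → (geomGraph x r).Adj i j :=
    fun s => geomGraph_adj_of_mem (hbdd.subset (hA s)) (hdiam s)
  have hbottom : ∀ {k}, σ k ≤ 0 ↔ x k ∈ A 0 := fun {k} =>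
    ⟨fun h => Fin.le_zero_iff.mp h ▸ mem_firstCover hcov k, firstCover_le hcov⟩
  refine isTrilateration_of_levels σ 0 (by simpa only [hbottom] using h0)
    (fun i hi j hj hij => hadj 0 hij (hbottom.mp hi) (hbottom.mp hj)) fun j hj => ?_
  obtain ⟨s, hs⟩ := Fin.exists_succ_eq.mpr hj.ne'
  have hsub :
      {k | x k ∈ A s.castSucc ∩ A s.succ} ⊆ {k | σ k < σ j ∧ (geomGraph x r).Adj k j} := by
    intro k ⟨hks, hks'⟩
    have hlt : σ k < σ j := hs ▸ (firstCover_le hcov hks).trans_lt s.castSucc_lt_succ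
    exact ⟨hlt, hadj s.succ (fun h => hlt.ne (congrArg σ h)) hks' (hs ▸ mem_firstCover hcov j)⟩
  exact (hI s).trans (Set.ncard_le_ncard hsub)

/-- If points `x_1, ..., x_n` in a bounded open connected set `Ω ⊆ ℝ^p` are covered
by a chain of sets `A_0, ..., A_S ⊆ Ω`, each of diameter `< r`, where the first set
contains at least `p+1` points and each consecutive intersection contains at least
`p+1` points, then the geometric graph with connectivity radius `r` is a
trilateration graph in dimension `p`. -/
theorem chain_cover_trilateration {n p S : ℕ} (r : ℝ)
    (Ω : Set (EuclideanSpace ℝ (Fin p)))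
    (hbdd : Bornology.IsBounded Ω) (hopen : IsOpen Ω) (hconn : IsConnected Ω)
    (x : Fin n → EuclideanSpace ℝ (Fin p)) (hx : ∀ i, x i ∈ Ω)
    (A : Fin (S + 1) → Set (EuclideanSpace ℝ (Fin p)))
    (hA : ∀ s, A s ⊆ Ω)
    (hdiam : ∀ s, Metric.diam (A s) < r)
    (hcov : ∀ i, ∃ s, x i ∈ A s)
    (h0 : p + 1 ≤ {i : Fin n | x i ∈ A 0}.ncard)
    (hI : ∀ s : Fin S,
      p + 1 ≤ {i : Fin n | x i ∈ A s.castSucc ∩ A s.succ}.ncard) :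
    IsTrilateration p (geomGraph x r) :=
  chain_cover_trilateration_general r Ω hbdd x A hA hdiam hcov h0 hI
end

section
/- Let a configuration of n points be drawn i.i.d. from a density supported on the closure of a bounded, open, connected set Omega ⊂ R^p. Then there exists a sequence r_n -> 0 such that the geometric graph on the configuration with any connectivity radius r >= r_n is a trilateration graph in dimension p with probability tending to one as n -> infinity. -/
open MeasureTheory Filter

/-!
Cover `closure Ω` by finitely many balls `B(z_k, r/4)` whose centres form a connected geometric
graph at radius `r/2`. With probability tending to one every ball holds at least `p + 1` sample
points: split the sample into `p + 1` blocks, each of which misses a given ball of positive mass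
with exponentially small probability. On that event rank each point by the least graph distance
from a root cell to a cell containing it. Sorting by rank is a trilateration ordering, since the
rank-`0` points share the root ball and every other point is within `r` of the `p + 1` points of
a parent cell, which have smaller rank. A diagonal sequence over the radii `1/(k+1)` gives
`r_n → 0`.
-/

open Topology
open scoped ENNReal

theorem SimpleGraph.Reachable.exists_adj_dist_lt {V : Type*} {G : SimpleGraph V} {u v : V}
    (h : G.Reachable u v) (hne : u ≠ v) : ∃ w, G.Adj v w ∧ G.dist u w < G.dist u v := by
  obtain ⟨q, hq⟩ := h.symm.exists_walk_length_eq_dist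
  cases q with
  | nil => exact absurd rfl hne
  | cons hadj q =>
    refine ⟨_, hadj, ?_⟩
    rw [SimpleGraph.dist_comm, SimpleGraph.dist_comm (u := u), ← hq]
    exact (SimpleGraph.dist_le q).trans_lt (by simp)

theorem Filter.exists_tendsto_diagonal {X : Type*} {l : Filter X} [l.IsCountablyGenerated]
    (f : ℕ → ℕ → X) (hf : ∀ k, Tendsto (f k) atTop l) :
    ∃ φ : ℕ → ℕ, Tendsto φ atTop atTop ∧ Tendsto (fun n => f (φ n) n) atTop l := by
  obtain ⟨U, hU⟩ := l.exists_antitone_basis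
  obtain ⟨N, hN, hNU⟩ := extraction_forall_of_eventually
    (P := fun k m => ∀ n ≥ m, f k n ∈ U k)
    fun k => eventually_forall_ge_atTop.2 ((hf k).eventually (hU.mem k))
  let φ (n : ℕ) : ℕ := Nat.findGreatest (fun k => N k ≤ n) n
  have hφ_ge {k n : ℕ} (h : N k ≤ n) : k ≤ φ n := Nat.le_findGreatest ((hN.id_le k).trans h) h
  have hφ_spec {n : ℕ} (h : N 0 ≤ n) : N (φ n) ≤ n :=
    Nat.findGreatest_spec (P := fun k => N k ≤ n) (Nat.zero_le n) h
  refine ⟨φ, tendsto_atTop_atTop.2 fun k => ⟨N k, fun n => hφ_ge⟩,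
    hU.tendsto_right_iff.2 fun k _ => ?_⟩
  filter_upwards [eventually_ge_atTop (N k)] with n hn
  exact hU.antitone (hφ_ge hn) (hNU (φ n) n (hφ_spec ((hN.monotone (Nat.zero_le k)).trans hn)))

section
variable {α : Type*} [MeasurableSpace α] (μ : Measure α) [IsProbabilityMeasure μ]

theorem one_sub_measure_compl_le (s : Set α) : 1 - μ sᶜ ≤ μ s := by
  rw [tsub_le_iff_right, ← measure_univ (μ := μ), ← Set.union_compl_self s]
  exact measure_union_le _ _

theorem measure_pi_forall_comp_mem {ι κ : Type*} [Fintype ι] [Fintype κ] {g : κ → ι}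
    (hg : Function.Injective g) (C : Set α) :
    Measure.pi (fun _ : ι => μ) {x | ∀ j, x (g j) ∈ C} = μ C ^ Fintype.card κ := by
  classical
  have hset : {x : ι → α | ∀ j, x (g j) ∈ C} =
      Set.univ.pi fun i => if i ∈ Finset.univ.image g then C else Set.univ := by
    ext x
    simp
  rw [hset, Measure.pi_pi]
  simp only [apply_ite μ, measure_univ]
  rw [Fintype.prod_ite_mem, Finset.prod_const, Finset.card_image_of_injective _ hg,
    Finset.card_univ]

theorem tendsto_measure_pi_ncard_mem_le {A : Set α} (hA : MeasurableSet A) (hμA : μ A ≠ 0)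
    (p : ℕ) : Tendsto (fun n => Measure.pi (fun _ : Fin n => μ) {x | {i | x i ∈ A}.ncard ≤ p})
      atTop (𝓝 0) := by
  have hlt : μ Aᶜ < 1 := by
    rw [prob_compl_eq_one_sub hA]
    exact ENNReal.sub_lt_self ENNReal.one_ne_top one_ne_zero hμA
  have hbound : Tendsto (fun n => (p + 1 : ℝ≥0∞) * μ Aᶜ ^ (n / (p + 1))) atTop (𝓝 0) := by
    simpa using ENNReal.Tendsto.const_mul
      ((ENNReal.tendsto_pow_atTop_nhds_zero_of_lt_one hlt).comp
        (Nat.tendsto_div_const_atTop p.succ_ne_zero)) (.inr (by simp))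
  refine tendsto_of_tendsto_of_tendsto_of_le_of_le tendsto_const_nhds hbound (fun _ => zero_le)
    fun n => ?_
  set q := n / (p + 1)
  let block (bj : Fin (p + 1) × Fin q) : Fin n :=
    Fin.castLE (Nat.mul_div_le n (p + 1)) (finProdFinEquiv bj)
  have hblock : Function.Injective block := (Fin.castLE_injective _).comp finProdFinEquiv.injective
  have hsub : {x : Fin n → α | {i | x i ∈ A}.ncard ≤ p} ⊆
      ⋃ b, {x | ∀ j, x (block (b, j)) ∈ Aᶜ} := by
    intro x hx
    by_contra! hhit
    simp only [Set.mem_iUnion, Set.mem_ofPred_eq, Set.mem_compl_iff, not_exists, not_forall,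
      not_not] at hhit
    choose j hj using hhit
    have := Set.ncard_le_ncard_of_injOn (s := Set.univ) (t := {i | x i ∈ A})
      (fun b => block (b, j b)) (fun b _ => hj b)
      (fun b _ b' _ h => congrArg Prod.fst (hblock h)) (Set.toFinite _)
    simp only [Set.ncard_univ, Nat.card_eq_fintype_card, Fintype.card_fin] at this
    exact (Nat.lt_of_succ_le this).not_ge hx
  calc _ ≤ ∑ b, Measure.pi (fun _ : Fin n => μ) {x | ∀ j, x (block (b, j)) ∈ Aᶜ} :=
        (measure_mono hsub).trans (measure_iUnion_fintype_le _ _)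
    _ = (p + 1 : ℝ≥0∞) * μ Aᶜ ^ q := by
        rw [Finset.sum_congr rfl fun b _ => measure_pi_forall_comp_mem μ
          (g := fun j => block (b, j)) (hblock.comp (Prod.mk_right_injective b)) Aᶜ]
        simp

end

theorem IsTrilateration.mono {n p : ℕ} {G G' : SimpleGraph (Fin n)} (hG : G ≤ G')
    (h : IsTrilateration p G) : IsTrilateration p G' := by
  obtain ⟨hn, v, hclique, hstep⟩ := h
  refine ⟨hn, v, fun i j hi hj hij => hG (hclique i j hi hj hij), fun j hj => ?_⟩
  exact (hstep j hj).trans (Set.ncard_le_ncard fun i hi => ⟨hi.1, hG hi.2⟩)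

theorem isTrilateration_of_layers {n p : ℕ} {G : SimpleGraph (Fin n)} (κ : Fin n → ℕ)
    (hbase : p + 1 ≤ {i | κ i = 0}.ncard) (hclique : G.IsClique {i | κ i = 0})
    (hstep : ∀ i, 0 < κ i → p + 1 ≤ {j | κ j < κ i ∧ G.Adj j i}.ncard) :
    IsTrilateration p G := by
  set σ := Tuple.sort κ
  have hmono : Monotone (κ ∘ σ) := Tuple.monotone_sort κ
  have hcard_Iio (t : Fin n) : (Set.Iio t).ncard = t := by
    simpa using Set.ncard_coe_finset (Finset.Iio t)
  have hn : p + 1 ≤ n := hbase.trans ((Set.ncard_le_ncard (Set.subset_univ _)).trans (by simp))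
  have hfirst (t : Fin n) (ht : t.val < p + 1) : κ (σ t) = 0 := by
    by_contra hne
    have hsub : {i | κ i = 0} ⊆ σ '' Set.Iio t := fun i (hi : κ i = 0) =>
      ⟨σ.symm i, hmono.reflect_lt (by simpa [hi] using Nat.pos_of_ne_zero hne), by simp⟩
    have := (Set.ncard_le_ncard hsub).trans_eq
      ((Set.ncard_image_of_injective _ σ.injective).trans (hcard_Iio t))
    omega
  refine ⟨hn, σ, fun i j hi hj hij => hclique (hfirst i hi) (hfirst j hj) (σ.injective.ne hij),
    fun j hj => ?_⟩
  rcases Nat.eq_zero_or_pos (κ (σ j)) with h0 | hpos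
  · let t : Fin n := ⟨p + 1, hj.trans_lt j.isLt⟩
    have hsub : Set.Iio t ⊆ {i | i < j ∧ G.Adj (σ i) (σ j)} := fun i (hi : i < t) =>
      have hij : i < j := hi.trans_le hj
      ⟨hij, hclique (hfirst i hi) h0 (σ.injective.ne hij.ne)⟩
    exact (hcard_Iio t).symm.trans_le (Set.ncard_le_ncard hsub)
  · have hsub : σ ⁻¹' {v | κ v < κ (σ j) ∧ G.Adj v (σ j)} ⊆ {i | i < j ∧ G.Adj (σ i) (σ j)} :=
      fun i hi => ⟨hmono.reflect_lt hi.1, hi.2⟩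
    calc p + 1 ≤ {v | κ v < κ (σ j) ∧ G.Adj v (σ j)}.ncard := hstep _ hpos
      _ = (σ ⁻¹' {v | κ v < κ (σ j) ∧ G.Adj v (σ j)}).ncard :=
        (Set.ncard_preimage_of_injective_subset_range σ.injective (by simp)).symm
      _ ≤ _ := Set.ncard_le_ncard hsub

section
variable {p : ℕ}
local notation "E" => EuclideanSpace ℝ (Fin p)

theorem geomGraph_mono {n : ℕ} (x : Fin n → E) {r s : ℝ} (hrs : r ≤ s) :
    geomGraph x r ≤ geomGraph x s :=
  fun _ _ h => ⟨h.1, h.2.trans_le hrs⟩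

theorem reachable_geomGraph_of_dist_lt {m : ℕ} {z : Fin m → E} {r : ℝ} {k l : Fin m}
    (h : dist (z k) (z l) < r) : (geomGraph z r).Reachable k l := by
  rcases eq_or_ne k l with rfl | hne
  · rfl
  · exact SimpleGraph.Adj.reachable ⟨hne, h⟩

theorem isTrilateration_geomGraph_of_cover {n m : ℕ} {δ : ℝ} (x : Fin n → E) (z : Fin m → E)
    (hH : (geomGraph z (2 * δ)).Connected) (hcov : ∀ i, ∃ k, dist (x i) (z k) < δ)
    (hcount : ∀ k, p + 1 ≤ {i | dist (x i) (z k) < δ}.ncard) :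
    IsTrilateration p (geomGraph x (4 * δ)) := by
  obtain ⟨k₀⟩ := hH.nonempty
  set ρ : Fin m → ℕ := (geomGraph z (2 * δ)).dist k₀
  set κ : Fin n → ℕ := fun i => sInf (ρ '' {k | dist (x i) (z k) < δ})
  have hκ_mem (i : Fin n) : ∃ k, dist (x i) (z k) < δ ∧ ρ k = κ i :=
    Nat.sInf_mem (Set.Nonempty.image ρ (hcov i))
  have hκ_le {i : Fin n} {k : Fin m} (hk : dist (x i) (z k) < δ) : κ i ≤ ρ k :=
    Nat.sInf_le ⟨k, hk, rfl⟩
  have hκ_zero {i : Fin n} (hi : κ i = 0) : dist (x i) (z k₀) < δ := by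
    obtain ⟨k, hk, hρk⟩ := hκ_mem i
    rwa [← ((hH.preconnected k₀ k).dist_eq_zero_iff.1 (hρk.trans hi))] at hk
  refine isTrilateration_of_layers κ ?_ ?_ ?_
  · exact (hcount k₀).trans (Set.ncard_le_ncard fun i hi =>
      Nat.le_zero.1 ((hκ_le hi).trans_eq SimpleGraph.dist_self))
  · intro i hi j hj hij
    refine ⟨hij, ?_⟩
    calc dist (x i) (x j) ≤ dist (x i) (z k₀) + dist (x j) (z k₀) := dist_triangle_right _ _ _
      _ < δ + δ := add_lt_add (hκ_zero hi) (hκ_zero hj)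
      _ ≤ 4 * δ := by linarith [dist_nonneg.trans_lt (hκ_zero hi)]
  · intro i hi
    obtain ⟨c, hc, hρc⟩ := hκ_mem i
    obtain ⟨l, hcl, hρl⟩ := (hH.preconnected k₀ c).exists_adj_dist_lt (by
      rintro rfl
      exact hi.ne' (hρc.symm.trans SimpleGraph.dist_self))
    refine (hcount l).trans (Set.ncard_le_ncard fun j (hj : dist (x j) (z l) < δ) => ?_)
    have hκj : κ j < κ i := (hκ_le hj).trans_lt (hρc ▸ hρl)
    refine ⟨hκj, fun h => hκj.ne (congrArg κ h), ?_⟩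
    calc dist (x j) (x i) ≤ dist (x j) (z l) + dist (z c) (z l) + dist (x i) (z c) := by
          rw [dist_comm (z c), dist_comm (x i)]
          exact dist_triangle4 _ _ _ _
      _ < δ + 2 * δ + δ := add_lt_add (add_lt_add hj hcl.2) hc
      _ = 4 * δ := by ring

theorem exists_cover_geomGraph_connected {K : Set E} (hK : TotallyBounded K)
    (hconn : IsConnected K) {δ : ℝ} (hδ : 0 < δ) :
    ∃ (m : ℕ) (z : Fin m → E), (∀ k, z k ∈ K) ∧ (∀ w ∈ K, ∃ k, dist w (z k) < δ) ∧
      (geomGraph z (2 * δ)).Connected := by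
  obtain ⟨t, htK, htfin, hcovt⟩ := Metric.finite_approx_of_totallyBounded hK δ hδ
  obtain ⟨m, z, rfl⟩ := htfin.fin_embedding
  have hcov (w : E) (hw : w ∈ K) : ∃ k, dist w (z k) < δ := by
    simpa using hcovt hw
  let linked (w w' : E) : Prop := ∃ k k', dist w (z k) < δ ∧ dist w' (z k') < δ ∧
    (geomGraph z (2 * δ)).Reachable k k'
  have hchain {w w' : E} (hw : w ∈ K) (hw' : w' ∈ K) : linked w w' := by
    refine hconn.isPreconnected.induction₂ linked (fun w hw => ?_) (fun w₁ w₂ w₃ _ _ _ => ?_)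
      (fun w₁ w₂ _ _ => ?_) hw hw'
    · obtain ⟨k, hk⟩ := hcov w hw
      filter_upwards [nhdsWithin_le_nhds (Metric.isOpen_ball.mem_nhds (Metric.mem_ball.2 hk))]
        with w' hw'
      exact ⟨k, k, hk, hw', .refl k⟩
    · rintro ⟨k₁, k₂, h₁, h₂, h₁₂⟩ ⟨k₂', k₃, h₂', h₃, h₂₃⟩
      refine ⟨k₁, k₃, h₁, h₃, h₁₂.trans ((reachable_geomGraph_of_dist_lt ?_).trans h₂₃)⟩
      linarith [dist_triangle_left (z k₂) (z k₂') w₂]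
    · rintro ⟨k, k', h, h', hkk'⟩
      exact ⟨k', k, h', h, hkk'.symm⟩
  obtain ⟨w₀, hw₀⟩ := hconn.nonempty
  refine ⟨m, z, fun k => htK ⟨k, rfl⟩, hcov, ?_⟩
  refine (SimpleGraph.connected_iff _).2 ⟨fun k k' => ?_, (hcov w₀ hw₀).nonempty⟩
  obtain ⟨k₁, k₂, h₁, h₂, h₁₂⟩ := hchain (htK ⟨k, rfl⟩) (htK ⟨k', rfl⟩)
  exact (reachable_geomGraph_of_dist_lt (by linarith)).trans
    (h₁₂.trans (reachable_geomGraph_of_dist_lt (by rw [dist_comm]; linarith)))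

theorem tendsto_measure_pi_isTrilateration {Ω : Set E} (hbdd : Bornology.IsBounded Ω)
    (hopen : IsOpen Ω) (hconn : IsConnected Ω) (P : Measure E) [IsProbabilityMeasure P]
    (hsupp : P (closure Ω)ᶜ = 0)
    (hpos : ∀ A : Set E, A ⊆ Ω → IsOpen A → A.Nonempty → 0 < P A) {t : ℝ} (ht : 0 < t) :
    Tendsto (fun n => Measure.pi (fun _ : Fin n => P)
      {x | ∀ s, t ≤ s → IsTrilateration p (geomGraph x s)}) atTop (𝓝 1) := by
  obtain ⟨m, z, hzΩ, hcov, hH⟩ := exists_cover_geomGraph_connected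
    hbdd.isCompact_closure.totallyBounded hconn.closure (δ := t / 4) (by positivity)
  let A (k : Fin m) : Set E := Metric.ball (z k) (t / 4) ∩ Ω
  have hA_open (k : Fin m) : IsOpen (A k) := Metric.isOpen_ball.inter hopen
  have hPA (k : Fin m) : P (A k) ≠ 0 := (hpos _ Set.inter_subset_right (hA_open k)
    (mem_closure_iff.1 (hzΩ k) _ Metric.isOpen_ball (Metric.mem_ball_self (by positivity)))).ne'
  have hbad (n : ℕ) : {x : Fin n → E | ∀ s, t ≤ s → IsTrilateration p (geomGraph x s)}ᶜ ⊆
      (⋃ i, Function.eval i ⁻¹' (closure Ω)ᶜ) ∪ ⋃ k, {x | {i | x i ∈ A k}.ncard ≤ p} := by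
    intro x hx
    by_contra! hgood
    simp only [Set.mem_union, Set.mem_iUnion, Set.mem_preimage, Function.eval,
      Set.mem_compl_iff, not_or, not_exists, not_not, Set.mem_ofPred_eq, not_le] at hgood
    have htri : IsTrilateration p (geomGraph x (4 * (t / 4))) :=
      isTrilateration_geomGraph_of_cover x z hH (fun i => hcov _ (hgood.1 i))
        fun k => (hgood.2 k).trans_le (Set.ncard_le_ncard fun i hi => hi.1)
    exact hx fun s hs => htri.mono (geomGraph_mono x (by linarith))
  have hnull (n : ℕ) :
      Measure.pi (fun _ : Fin n => P) (⋃ i, Function.eval i ⁻¹' (closure Ω)ᶜ) = 0 :=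
    measure_iUnion_null fun i => Measure.pi_eval_preimage_null _ hsupp
  have hsparse := tendsto_finsetSum Finset.univ fun k _ =>
    tendsto_measure_pi_ncard_mem_le P (hA_open k).measurableSet (hPA k) p
  have hbad_measure : Tendsto (fun n => Measure.pi (fun _ : Fin n => P)
      {x | ∀ s, t ≤ s → IsTrilateration p (geomGraph x s)}ᶜ) atTop (𝓝 0) := by
    refine tendsto_of_tendsto_of_tendsto_of_le_of_le tendsto_const_nhds (by simpa using hsparse)
      (fun _ => zero_le) fun n => ?_
    calc _ ≤ _ := measure_mono (hbad n)
      _ ≤ _ := measure_union_le _ _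
      _ ≤ _ := by rw [hnull, zero_add]; exact measure_iUnion_fintype_le _ _
  refine tendsto_of_tendsto_of_tendsto_of_le_of_le ?_ tendsto_const_nhds
    (fun n => one_sub_measure_compl_le _ _) fun n => prob_le_one
  simpa using ENNReal.Tendsto.sub tendsto_const_nhds hbad_measure (.inl ENNReal.one_ne_top)

end

theorem rgg_trilateration_general {p : ℕ} (Ω : Set (EuclideanSpace ℝ (Fin p)))
    (hbdd : Bornology.IsBounded Ω) (hopen : IsOpen Ω) (hconn : IsConnected Ω)
    (P : Measure (EuclideanSpace ℝ (Fin p))) [IsProbabilityMeasure P]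
    (hsupp : P ((closure Ω)ᶜ) = 0)
    (hpos : ∀ A : Set (EuclideanSpace ℝ (Fin p)),
      A ⊆ Ω → IsOpen A → A.Nonempty → 0 < P A) :
    ∃ r : ℕ → ℝ, Tendsto r atTop (nhds 0) ∧
      Tendsto
        (fun n => (Measure.pi fun _ : Fin n => P)
          {x : Fin n → EuclideanSpace ℝ (Fin p) |
            ∀ s : ℝ, r n ≤ s → IsTrilateration p (geomGraph x s)})
        atTop (nhds 1) := by
  obtain ⟨φ, hφ, hdiag⟩ := exists_tendsto_diagonal
    (fun k n => Measure.pi (fun _ : Fin n => P)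
      {x | ∀ s, 1 / ((k : ℝ) + 1) ≤ s → IsTrilateration p (geomGraph x s)})
    fun k => tendsto_measure_pi_isTrilateration hbdd hopen hconn P hsupp hpos (by positivity)
  exact ⟨fun n => 1 / ((φ n : ℝ) + 1), tendsto_one_div_add_atTop_nhds_zero_nat.comp hφ, hdiag⟩

/-- Theorem 1: if a configuration of `n` points is drawn i.i.d. from a density
supported on the closure of a bounded, open, connected set `Ω ⊆ ℝ^p`, then there is
a sequence `r_n → 0` such that, with probability tending to one as `n → ∞`, the
geometric graph on the configuration with any connectivity radius `r ≥ r_n` is a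
trilateration graph in dimension `p`. -/
theorem rgg_trilateration {p : ℕ} (Ω : Set (EuclideanSpace ℝ (Fin p)))
    (hbdd : Bornology.IsBounded Ω) (hopen : IsOpen Ω) (hconn : IsConnected Ω)
    (P : Measure (EuclideanSpace ℝ (Fin p))) [IsProbabilityMeasure P]
    (hac : P ≪ volume)
    (hsupp : P ((closure Ω)ᶜ) = 0)
    (hpos : ∀ A : Set (EuclideanSpace ℝ (Fin p)),
      A ⊆ Ω → IsOpen A → A.Nonempty → 0 < P A) :
    ∃ r : ℕ → ℝ, Tendsto r atTop (nhds 0) ∧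
      Tendsto
        (fun n => (Measure.pi fun _ : Fin n => P)
          {x : Fin n → EuclideanSpace ℝ (Fin p) |
            ∀ s : ℝ, r n ≤ s → IsTrilateration p (geomGraph x s)})
        atTop (nhds 1) :=
  rgg_trilateration_general Ω hbdd hopen hconn P hsupp hpos
end

section
/- Let x_1,...,x_m ∈ R^p be a configuration whose vectors span R^p, written as the rows of the matrix Y ∈ R^{m×p}, and let x ∈ R^p. Define d_i = ||x - x_i|| and a_j = (1/m) Σ_{i=1}^m ||x_i - x_j||^2. If Σ_{i=1}^m x_i = 0 (centered landmarks), then the trilateration output y = (1/2) Y^† (a - d^{∘2}), where Y^† is the Moore–Penrose pseudo-inverse of Y, d^{∘2} = (d_1^2,...,d_m^2), and a = (a_1,...,a_m), satisfies y = x. -/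
open Matrix
open scoped RealInnerProductSpace

/-! The trilateration input is affine in the unknown point: by centering,
`aᵢ - dᵢ² = c + 2⟪xᵢ, z⟫` with `c` independent of `i`, i.e. `a - d² = c𝟙 + Y (2z)`.
The left inverse `Y† = (YᵀY)⁻¹Yᵀ` (which exists because the rows of `Y` span) recovers `2z`
from `Y (2z)`, and it kills `c𝟙` because `Yᵀ𝟙` is the sum of the rows, which is zero. -/

section Centering

variable {ι E : Type*} [Fintype ι] [NormedAddCommGroup E] [InnerProductSpace ℝ E]

theorem sum_norm_sub_sq_of_sum_eq_zero {x : ι → E} (hx : ∑ i, x i = 0) (y : E) :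
    ∑ i, ‖x i - y‖ ^ 2 = ∑ i, ‖x i‖ ^ 2 + Fintype.card ι * ‖y‖ ^ 2 := by
  have hinner : ∑ i, ⟪x i, y⟫ = 0 := by rw [← sum_inner, hx, inner_zero_left]
  simp only [norm_sub_sq_real, Finset.sum_add_distrib, Finset.sum_sub_distrib, ← Finset.mul_sum,
    hinner, Finset.sum_const, Finset.card_univ, nsmul_eq_mul]
  ring

theorem mean_sq_dist_sub_sq_dist_of_sum_eq_zero {x : ι → E} (hx : ∑ i, x i = 0) (z : E)
    (j : ι) :
    (1 / Fintype.card ι : ℝ) * ∑ i, ‖x i - x j‖ ^ 2 - ‖z - x j‖ ^ 2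
      = ((1 / Fintype.card ι : ℝ) * ∑ i, ‖x i‖ ^ 2 - ‖z‖ ^ 2) + 2 * ⟪x j, z⟫ := by
  have hcard : (Fintype.card ι : ℝ) ≠ 0 :=
    Nat.cast_ne_zero.mpr (Fintype.card_pos_iff.mpr ⟨j⟩).ne'
  rw [sum_norm_sub_sq_of_sum_eq_zero hx, norm_sub_sq_real, real_inner_comm]
  field_simp
  ring

end Centering

section LeftInverse

variable {ι n R : Type*} [Fintype ι]

theorem Matrix.isUnit_transpose_mul_self_of_span_row_eq_top [Fintype n] [DecidableEq n] [Field R]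
    [LinearOrder R] [IsStrictOrderedRing R] {Y : Matrix ι n R}
    (h : Submodule.span R (Set.range Y.row) = ⊤) : IsUnit (Yᵀ * Y) := by
  have hrank : (Yᵀ * Y).rank = Module.finrank R (n → R) := by
    rw [rank_transpose_mul_self, rank_eq_finrank_span_row, h, finrank_top]
  rw [← mulVec_surjective_iff_isUnit, ← coe_mulVecLin, ← LinearMap.range_eq_top]
  exact Submodule.eq_top_of_finrank_eq hrank

theorem Matrix.transpose_mulVec_const_of_sum_row_eq_zero [CommRing R] {Y : Matrix ι n R}
    (hY : ∑ i, Y i = 0) (c : R) : Yᵀ *ᵥ Function.const ι c = 0 := by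
  rw [show Function.const ι c = c • 1 from funext fun _ => (mul_one c).symm, mulVec_smul,
    mulVec_one, transpose_transpose, hY, smul_zero]

theorem Matrix.inv_transpose_mul_self_mul_transpose_mulVec [Fintype n] [DecidableEq n] [CommRing R]
    {Y : Matrix ι n R} (hunit : IsUnit (Yᵀ * Y)) (hY : ∑ i, Y i = 0) (c : R) (v : n → R) :
    ((Yᵀ * Y)⁻¹ * Yᵀ) *ᵥ (Function.const ι c + Y *ᵥ v) = v := by
  rw [mulVec_add, ← mulVec_mulVec, transpose_mulVec_const_of_sum_row_eq_zero hY, mulVec_zero,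
    zero_add, mulVec_mulVec, Matrix.mul_assoc,
    nonsing_inv_mul _ ((isUnit_iff_isUnit_det _).mp hunit), one_mulVec]

end LeftInverse

theorem EuclideanSpace.span_range_ofLp_eq_top {ι n : Type*}
    {x : ι → EuclideanSpace ℝ n} (h : Submodule.span ℝ (Set.range x) = ⊤) :
    Submodule.span ℝ (Set.range fun i => (x i).ofLp) = ⊤ := by
  change Submodule.span ℝ (Set.range (WithLp.linearEquiv 2 ℝ (n → ℝ) ∘ x)) = ⊤
  rw [Set.range_comp, Submodule.span_image_linearEquiv, h,
    Submodule.map_top, LinearEquiv.range]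

/-- Exactness of the trilateration method of de Silva--Tenenbaum in the noiseless
case: for centered landmarks `x_1, ..., x_m` spanning `ℝ^p` (rows of `Y`), exact
squared distances `d_i^2 = ‖z - x_i‖^2` and `a_j = (1/m) Σ_i ‖x_i - x_j‖^2`, the
output `y = ½ Y† (a - d^{∘2})` equals `z`.  Since `Y` has full column rank, its
Moore--Penrose pseudo-inverse is `Y† = (Yᵀ Y)⁻¹ Yᵀ`. -/
theorem trilateration_exact {m p : ℕ}
    (x : Fin m → EuclideanSpace ℝ (Fin p)) (z : EuclideanSpace ℝ (Fin p))
    (hspan : Submodule.span ℝ (Set.range x) = ⊤)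
    (hcenter : ∑ i, x i = 0) :
    let Y : Matrix (Fin m) (Fin p) ℝ := Matrix.of fun i k => x i k
    let Ydag : Matrix (Fin p) (Fin m) ℝ := (Yᵀ * Y)⁻¹ * Yᵀ
    let d2 : Fin m → ℝ := fun i => ‖z - x i‖ ^ 2
    let a : Fin m → ℝ := fun i => (1 / m : ℝ) * ∑ i', ‖x i' - x i‖ ^ 2
    ∀ j : Fin p, ((1 / 2 : ℝ) • Ydag.mulVec (a - d2)) j = z j := by
  intro Y Ydag d2 a j
  have hrows : ∑ i, Y i = 0 := by
    change ∑ i, (x i).ofLp = 0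
    rw [← WithLp.ofLp_sum, hcenter, WithLp.ofLp_zero]
  have hunit : IsUnit (Yᵀ * Y) :=
    isUnit_transpose_mul_self_of_span_row_eq_top (EuclideanSpace.span_range_ofLp_eq_top hspan)
  have hY : Y *ᵥ z.ofLp = fun i => ⟪x i, z⟫ :=
    funext fun i => by simp [Y, mulVec, EuclideanSpace.inner_eq_star_dotProduct, dotProduct_comm]
  have hinput : a - d2 = Function.const _ ((1 / m : ℝ) * ∑ i, ‖x i‖ ^ 2 - ‖z‖ ^ 2)
      + Y *ᵥ (2 • z.ofLp) := by
    ext i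
    rw [Pi.add_apply, mulVec_smul, hY]
    simpa [a, d2] using mean_sq_dist_sub_sq_dist_of_sum_eq_zero hcenter z i
  simp [Ydag, hinput, inv_transpose_mul_self_mul_transpose_mulVec hunit hrows]
end

section
/- For any symmetric matrix of dissimilarities (d_{ij})_{1<=i,j<=n} with d_{ii} = 0 and d_{ij} = d_{ji} >= 0, there exists a constant c >= 0 such that the dissimilarities e_{ij} = d_{ij} + c for i ≠ j (and e_{ii} = 0) are Euclidean in dimension n-1: there exist points y_1,...,y_n ∈ R^{n-1} with ||y_i - y_j|| = e_{ij} for all i, j. -/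
/-!
Put the first point at the origin. By polarization the squared dissimilarities `(d i j + c)²`
prescribe the Gram matrix `G(c)` of the other `n - 1` points, and such points exist in `ℝ^{n-1}`
as soon as `G(c)` is positive semidefinite: take the columns of any `B` with `G(c) = Bᵀ B`.
Expanding the squares, `G(c) = (c² / 2) (J + I) + O(c)` entrywise. Here `(c² / 2) J` is positive
semidefinite and `(c² / 2) I + O(c)` is diagonally dominant once `c` is large, hence positive
semidefinite by Gershgorin's circle theorem.
-/

open Finset Matrix

namespace Matrix

variable {n : Type*} [Fintype n]

theorem IsHermitian.hasEigenvalue_eigenvalues [DecidableEq n] {𝕜 : Type*} [RCLike 𝕜]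
    {A : Matrix n n 𝕜} (hA : A.IsHermitian) (i : n) :
    Module.End.HasEigenvalue (toLin' A) (hA.eigenvalues i : 𝕜) :=
  Module.End.hasEigenvalue_of_hasEigenvector (x := ⇑(hA.eigenvectorBasis i))
    ⟨Module.End.mem_eigenspace_iff.mpr (by
      rw [toLin'_apply, hA.mulVec_eigenvectorBasis, RCLike.real_smul_eq_coe_smul (K := 𝕜)]),
      by simpa using hA.eigenvectorBasis.orthonormal.ne_zero i⟩

theorem IsHermitian.posSemidef_of_sum_abs_le_diag [DecidableEq n] {A : Matrix n n ℝ}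
    (hA : A.IsHermitian) (h : ∀ k, ∑ j ∈ univ.erase k, |A k j| ≤ A k k) : A.PosSemidef := by
  refine hA.posSemidef_iff_eigenvalues_nonneg.mpr fun i => show 0 ≤ hA.eigenvalues i from ?_
  obtain ⟨k, hk⟩ := eigenvalue_mem_ball (hA.hasEigenvalue_eigenvalues i)
  rw [Metric.mem_closedBall, Real.dist_eq] at hk
  simp only [Real.norm_eq_abs, RCLike.ofReal_real_eq_id, id_eq] at hk
  linarith [neg_abs_le (hA.eigenvalues i - A k k), h k]

theorem posSemidef_const_of_nonneg {a : ℝ} (ha : 0 ≤ a) : (of fun _ _ : n => a).PosSemidef := by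
  convert (posSemidef_vecMulVec_self_star (fun _ : n => (1 : ℝ))).smul ha using 1
  ext
  simp [vecMulVec_apply]

/-- `a * (if k = l then 2 else 1)` is the `(k, l)` entry of `a (J + I)`, `J` the all-ones matrix. -/
theorem IsHermitian.posSemidef_of_abs_sub_le [DecidableEq n] {G : Matrix n n ℝ}
    (hG : G.IsHermitian) {a K : ℝ} (ha : 0 ≤ a)
    (hK : ∀ k l, |G k l - a * (if k = l then 2 else 1)| ≤ K) (haK : Fintype.card n * K ≤ a) :
    G.PosSemidef := by
  set R := G - of fun _ _ => a
  have hR : R.IsHermitian := hG.sub (posSemidef_const_of_nonneg ha).isHermitian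
  have hdom : ∀ k, ∑ j ∈ univ.erase k, |R k j| ≤ R k k := by
    intro k
    have hoff : ∀ j ∈ univ.erase k, |R k j| ≤ K := fun j hj => by
      simpa [R, (ne_of_mem_erase hj).symm] using hK k j
    have hdiag : a - K ≤ R k k := by
      have := hK k k
      rw [if_pos rfl, abs_le] at this
      simp only [R, sub_apply, of_apply]
      linarith
    have hcard : ((univ.erase k).card : ℝ) * K = Fintype.card n * K - K := by
      rw [← card_univ, ← card_erase_add_one (mem_univ k)]
      push_cast
      ring
    calc ∑ j ∈ univ.erase k, |R k j| ≤ (univ.erase k).card * K := by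
          simpa using sum_le_card_nsmul _ _ _ hoff
      _ ≤ a - K := by linarith
      _ ≤ R k k := hdiag
  simpa [R] using (posSemidef_const_of_nonneg ha).add (hR.posSemidef_of_sum_abs_le_diag hdom)

end Matrix

/-- The Gram matrix of points `y 1, …, y m` relative to the origin `y 0`, read off the squared
distances `D i j = ‖y i - y j‖²` by polarization. -/
noncomputable def schoenbergGram {m : ℕ} (D : Matrix (Fin (m + 1)) (Fin (m + 1)) ℝ) :
    Matrix (Fin m) (Fin m) ℝ :=
  of fun k l => (D 0 k.succ + D 0 l.succ - D k.succ l.succ) / 2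

theorem isHermitian_schoenbergGram {m : ℕ} {D : Matrix (Fin (m + 1)) (Fin (m + 1)) ℝ}
    (hD : D.IsSymm) : (schoenbergGram D).IsHermitian :=
  IsHermitian.ext fun k l => by
    simp only [schoenbergGram, of_apply, star_trivial, hD.apply l.succ]
    ring

theorem dist_sq_eq_of_inner_eq {ι E : Type*} [NormedAddCommGroup E] [InnerProductSpace ℝ E]
    {D : ι → ι → ℝ} {y : ι → E} (i₀ : ι) (hD : ∀ i, D i i = 0)
    (hy : ∀ i j, inner ℝ (y i) (y j) = (D i₀ i + D i₀ j - D i j) / 2) (i j : ι) :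
    dist (y i) (y j) ^ 2 = D i j := by
  rw [dist_eq_norm, norm_sub_sq_real, ← real_inner_self_eq_norm_sq,
    ← real_inner_self_eq_norm_sq, hy, hy, hy, hD, hD]
  ring

open scoped MatrixOrder in
theorem exists_dist_sq_eq_of_posSemidef_schoenbergGram {m : ℕ}
    {D : Matrix (Fin (m + 1)) (Fin (m + 1)) ℝ} (hD : D.IsSymm) (hD0 : ∀ i, D i i = 0)
    (hG : (schoenbergGram D).PosSemidef) :
    ∃ y : Fin (m + 1) → EuclideanSpace ℝ (Fin m), ∀ i j, dist (y i) (y j) ^ 2 = D i j := by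
  obtain ⟨B, hB⟩ : ∃ B : Matrix (Fin m) (Fin m) ℝ, schoenbergGram D = Bᵀ * B :=
    CStarAlgebra.nonneg_iff_eq_star_mul_self.mp hG.nonneg
  refine ⟨Fin.cons 0 fun k => WithLp.toLp 2 (Bᵀ k),
    dist_sq_eq_of_inner_eq 0 hD0 fun i j => ?_⟩
  cases i using Fin.cases <;> cases j using Fin.cases
  case succ.succ k l =>
    have hkl := congrFun₂ hB k l
    simp only [schoenbergGram, of_apply, mul_apply, transpose_apply] at hkl
    simp [hkl, PiLp.inner_apply, mul_comm]
  all_goals simp [hD0, hD.apply]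

def addConstSq {ι : Type*} [DecidableEq ι] (d : Matrix ι ι ℝ) (c : ℝ) : Matrix ι ι ℝ :=
  of fun i j => if i = j then 0 else (d i j + c) ^ 2

theorem isSymm_addConstSq {ι : Type*} [DecidableEq ι] {d : Matrix ι ι ℝ} (hd : d.IsSymm)
    (c : ℝ) :
    (addConstSq d c).IsSymm :=
  IsSymm.ext fun i j => by simp [addConstSq, eq_comm, hd.apply]

theorem posSemidef_schoenbergGram_addConstSq {m : ℕ} {d : Matrix (Fin (m + 1)) (Fin (m + 1)) ℝ}
    (hd : d.IsSymm) {M c : ℝ} (hM : ∀ i j, |d i j| ≤ M) (hc : 0 ≤ c)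
    (hcM : 3 * m * (2 * c * M + M ^ 2) ≤ c ^ 2) :
    (schoenbergGram (addConstSq d c)).PosSemidef := by
  have hr : ∀ i j, |(d i j + c) ^ 2 - c ^ 2| ≤ 2 * c * M + M ^ 2 := fun i j => by
    have h := hM i j
    calc |(d i j + c) ^ 2 - c ^ 2| = |2 * c * d i j + d i j ^ 2| := by ring_nf
      _ ≤ 2 * c * |d i j| + |d i j| ^ 2 := by
          refine (abs_add_le _ _).trans ?_
          rw [abs_mul, abs_of_nonneg (by positivity : 0 ≤ 2 * c), abs_pow]
      _ ≤ 2 * c * M + M ^ 2 := by gcongr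
  refine (isHermitian_schoenbergGram (isSymm_addConstSq hd c)).posSemidef_of_abs_sub_le
    (a := c ^ 2 / 2) (K := 3 / 2 * (2 * c * M + M ^ 2)) (by positivity) (fun k l => ?_)
    (by rw [Fintype.card_fin]; linarith)
  obtain ⟨h0k, h0k'⟩ := abs_le.mp (hr 0 k.succ)
  obtain ⟨h0l, h0l'⟩ := abs_le.mp (hr 0 l.succ)
  obtain ⟨hkl, hkl'⟩ := abs_le.mp (hr k.succ l.succ)
  have hM0 : 0 ≤ 2 * c * M + M ^ 2 := (abs_nonneg _).trans (hr 0 0)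
  rw [abs_le]
  by_cases hlk : k = l
  · subst hlk
    simp only [schoenbergGram, addConstSq, of_apply, (Fin.succ_ne_zero k).symm, if_false, if_true]
    constructor <;> linarith
  · simp only [schoenbergGram, addConstSq, of_apply, hlk, (Fin.succ_ne_zero _).symm,
      Fin.succ_inj, if_false]
    constructor <;> linarith

theorem additive_constant_euclidean_general {n : ℕ} (d : Fin n → Fin n → ℝ)
    (hsymm : ∀ i j, d i j = d j i) :
    ∃ c : ℝ, 0 ≤ c ∧ ∃ y : Fin n → EuclideanSpace ℝ (Fin (n - 1)),
      ∀ i j, i ≠ j → dist (y i) (y j) = d i j + c := by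
  obtain _ | m := n
  · exact ⟨0, le_rfl, finZeroElim, fun i => i.elim0⟩
  set M := ‖d‖
  set c := 7 * (m + 1) * M
  have hM : 0 ≤ M := norm_nonneg d
  have hdM : ∀ i j, |d i j| ≤ M := fun i j =>
    (norm_le_pi_norm (d i) j).trans (norm_le_pi_norm d i)
  have hd : IsSymm (of d) := IsSymm.ext fun i j => hsymm j i
  have hc : 3 * m * (2 * c * M + M ^ 2) ≤ c ^ 2 := by nlinarith [sq_nonneg (m * M), sq_nonneg M]
  obtain ⟨y, hy⟩ := exists_dist_sq_eq_of_posSemidef_schoenbergGram (isSymm_addConstSq hd c)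
    (fun i => if_pos rfl) (posSemidef_schoenbergGram_addConstSq hd hdM (by positivity) hc)
  refine ⟨c, by positivity, y, fun i j hij => ?_⟩
  have hdc : 0 ≤ d i j + c := by nlinarith [neg_abs_le (d i j), hdM i j]
  exact (sq_eq_sq₀ dist_nonneg hdc).mp (by simpa [addConstSq, hij] using hy i j)

/-- Torgerson's additive constant result: for any symmetric hollow nonnegative
dissimilarities `(d_{ij})` on `n` items, there is a constant `c ≥ 0` such that the
dissimilarities `d_{ij} + c` (for `i ≠ j`) are realized exactly by a configuration
in `ℝ^{n-1}`. -/
theorem additive_constant_euclidean {n : ℕ} (d : Fin n → Fin n → ℝ)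
    (hsymm : ∀ i j, d i j = d j i) (hzero : ∀ i, d i i = 0)
    (hnonneg : ∀ i j, 0 ≤ d i j) :
    ∃ c : ℝ, 0 ≤ c ∧ ∃ y : Fin n → EuclideanSpace ℝ (Fin (n - 1)),
      ∀ i j, i ≠ j → dist (y i) (y j) = d i j + c :=
  additive_constant_euclidean_general d hsymm
end
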